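/- arXiv:2502.08559 — 3 statements merged into one kernel-verified Lean document; each statement's English description precedes it below -/
import Mathlib

section
/- Let A ∈ ℝ^{n×n} be symmetric, and let c, γ > 0. Then the matrix P = γ(√(A² + (c/γ)Iₙ) + A) is symmetric positive definite and satisfies the algebraic Riccati equation AᵀP + PA − P·(1/γ)·P + cIₙ = 0 (i.e., the ARE AᵀP + PA − PBR⁻¹BᵀP + Q = 0 with B = Iₙ, Q = cIₙ, R = γIₙ). -/
open Matrix
section
open scoped ComplexOrder
noncomputable def Matrix.PosSemidef.sqrt {n 𝕜 : Type*} [Fintype n] [RCLike 𝕜] [DecidableEq n]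
    {A : Matrix n n 𝕜} (hA : A.PosSemidef) : Matrix n n 𝕜 :=
  hA.1.eigenvectorUnitary.1 * diagonal ((↑) ∘ (√·) ∘ hA.1.eigenvalues) *
    (star hA.1.eigenvectorUnitary : Matrix n n 𝕜)
end
section
open scoped MatrixOrder
lemma Matrix.PosSemidef.sqrt_eq_cfc' {n : ℕ} {A : Matrix (Fin n) (Fin n) ℝ} (hA : A.PosSemidef) :
    hA.sqrt = CFC.sqrt A := by
  rw [CFC.sqrt_eq_real_sqrt A hA.nonneg, cfcₙ_eq_cfc, hA.1.cfc_eq, IsHermitian.cfc,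
    Unitary.conjStarAlgAut_apply]
  rfl
lemma Matrix.PosSemidef.sqrt_mul_self {n : ℕ} {A : Matrix (Fin n) (Fin n) ℝ} (hA : A.PosSemidef) :
    hA.sqrt * hA.sqrt = A := by
  rw [hA.sqrt_eq_cfc']
  exact CFC.sqrt_mul_sqrt_self A hA.nonneg
lemma Matrix.PosSemidef.eq_sqrt_of_sq_eq {n : ℕ} {A B : Matrix (Fin n) (Fin n) ℝ} (hA : A.PosSemidef)
    (hB : B.PosSemidef) (h : A ^ 2 = B) : A = hB.sqrt := by
  rw [hB.sqrt_eq_cfc']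
  exact (CFC.sqrt_unique (by rw [← pow_two, h]) hA.nonneg).symm
end

lemma posDef_smul' {n : ℕ} {M : Matrix (Fin n) (Fin n) ℝ} (hM : M.PosDef) {γ : ℝ}
    (hγ : 0 < γ) : (γ • M).PosDef := by
  refine PosDef.of_dotProduct_mulVec_pos (by simpa [IsHermitian, conjTranspose_smul] using congrArg (γ • ·) hM.1.eq) fun x hx => ?_
  rw [smul_mulVec, dotProduct_smul, smul_eq_mul]
  exact mul_pos hγ (hM.dotProduct_mulVec_pos hx)

lemma posDef_conj' {n : ℕ} {B U : Matrix (Fin n) (Fin n) ℝ} (hB : B.PosDef) (hU : IsUnit U) :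
    (U * B * Uᴴ).PosDef := by
  refine PosDef.of_dotProduct_mulVec_pos ?_ fun x hx => ?_
  · simp only [IsHermitian, conjTranspose_mul, conjTranspose_conjTranspose, hB.1.eq, mul_assoc]
  · have hUH : IsUnit Uᴴ := by
      simpa [Matrix.isUnit_iff_isUnit_det] using hU.map (detMonoidHom (R := ℝ))
    have hx' : Uᴴ *ᵥ x ≠ 0 :=
      (Matrix.mulVec_injective_iff_isUnit.mpr hUH |>.ne_iff' (by simp)).2 hx
    have key : star x ⬝ᵥ (U * B * Uᴴ) *ᵥ x
        = star (Uᴴ *ᵥ x) ⬝ᵥ B *ᵥ (Uᴴ *ᵥ x) := by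
      rw [star_mulVec, ← mulVec_mulVec, ← mulVec_mulVec, dotProduct_mulVec,
        conjTranspose_conjTranspose]
    rw [key]
    exact hB.dotProduct_mulVec_pos hx'


/-- for a symmetric `A ∈ ℝ^{n×n}` and `c, γ > 0`, the matrix
`P = γ(√(A² + (c/γ)Iₙ) + A)` is symmetric positive definite and solves the algebraic
Riccati equation `AᵀP + PA - (1/γ)P² + cIₙ = 0` (the ARE with `B = Iₙ`, `Q = cIₙ`,
`R = γIₙ`).  Here `√` is the positive semidefinite matrix square root of the positive
(semi)definite matrix `A² + (c/γ)Iₙ`. -/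
theorem stmt6 {n : ℕ} (A : Matrix (Fin n) (Fin n) ℝ) (hA : A.IsHermitian)
    (c γ : ℝ) (hc : 0 < c) (hγ : 0 < γ)
    (hM : (A ^ 2 + (c / γ) • (1 : Matrix (Fin n) (Fin n) ℝ)).PosSemidef) :
    (γ • (hM.sqrt + A)).PosDef ∧
    Aᵀ * (γ • (hM.sqrt + A)) + (γ • (hM.sqrt + A)) * A
      - γ⁻¹ • ((γ • (hM.sqrt + A)) * (γ • (hM.sqrt + A)))
      + c • (1 : Matrix (Fin n) (Fin n) ℝ) = 0 := by
  set S := hM.sqrt with hSdef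
  have hAT : Aᵀ = A := by
    have := hA.eq
    simpa [conjTranspose_eq_transpose_of_trivial] using this
  have hcγ : 0 < c / γ := div_pos hc hγ
  -- spectral data
  set U : Matrix (Fin n) (Fin n) ℝ := (hA.eigenvectorUnitary : Matrix (Fin n) (Fin n) ℝ) with hU
  set d : Fin n → ℝ := hA.eigenvalues with hd
  have hUU : U * Uᴴ = 1 := by
    have h := (Matrix.mem_unitaryGroup_iff).mp (hA.eigenvectorUnitary).2
    rwa [Matrix.star_eq_conjTranspose] at h
  have hUunit : IsUnit U := by
    have hdet : U.det * Uᴴ.det = 1 := by rw [← det_mul, hUU, det_one]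
    exact (Matrix.isUnit_iff_isUnit_det U).2 (IsUnit.of_mul_eq_one _ hdet)
  have hspec : A = U * diagonal d * Uᴴ := by
    have := hA.spectral_theorem
    simpa [star_eq_conjTranspose, Function.comp] using this
  set g : Fin n → ℝ := fun i => Real.sqrt (d i ^ 2 + c / γ) with hg
  set T : Matrix (Fin n) (Fin n) ℝ := U * diagonal g * Uᴴ with hT
  have hTpsd : T.PosSemidef := by
    refine (Matrix.posSemidef_diagonal_iff.mpr fun i => Real.sqrt_nonneg _).mul_mul_conjTranspose_same U
  have hTsq : T ^ 2 = A ^ 2 + (c / γ) • 1 := by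
    have hdiag : diagonal g * diagonal g = diagonal (fun i => d i ^ 2 + c / γ) := by
      rw [diagonal_mul_diagonal]
      exact congrArg _ (funext fun i => Real.mul_self_sqrt (by positivity))
    have e1 : T ^ 2 = U * diagonal (fun i => d i ^ 2 + c / γ) * Uᴴ := by
      rw [pow_two, hT]
      rw [show U * diagonal g * Uᴴ * (U * diagonal g * Uᴴ)
          = U * (diagonal g * (Uᴴ * U) * diagonal g) * Uᴴ by noncomm_ring]
      rw [show Uᴴ * U = 1 from mul_eq_one_comm.mp hUU, mul_one, hdiag]
    have e2 : A ^ 2 + (c / γ) • 1 = U * diagonal (fun i => d i ^ 2 + c / γ) * Uᴴ := by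
      have : A ^ 2 = U * diagonal (fun i => d i ^ 2) * Uᴴ := by
        rw [pow_two, hspec]
        rw [show U * diagonal d * Uᴴ * (U * diagonal d * Uᴴ)
            = U * (diagonal d * (Uᴴ * U) * diagonal d) * Uᴴ by noncomm_ring]
        rw [show Uᴴ * U = 1 from mul_eq_one_comm.mp hUU, mul_one,
          diagonal_mul_diagonal]
        exact congrArg (fun D => U * D * Uᴴ) (congrArg _ (funext fun i => (sq (d i)).symm))
      have h1 : (c / γ) • (1 : Matrix (Fin n) (Fin n) ℝ)
          = U * diagonal (fun _ => c / γ) * Uᴴ := by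
        rw [show (diagonal (fun _ => c / γ) : Matrix (Fin n) (Fin n) ℝ)
            = (c / γ) • 1 by simp [Matrix.smul_one_eq_diagonal]]
        rw [mul_smul_comm, smul_mul_assoc, mul_one, hUU]
      rw [this, h1, ← add_mul, ← mul_add, diagonal_add]
    rw [e1, e2]
  have hST : S = T := hTpsd.eq_sqrt_of_sq_eq hM hTsq ▸ rfl
  have hSA : S + A = U * diagonal (fun i => g i + d i) * Uᴴ := by
    rw [hST, hT, hspec, ← add_mul, ← mul_add, diagonal_add]
  constructor
  · rw [hSA]
    exact posDef_smul' (posDef_conj' (Matrix.PosDef.diagonal fun i => by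
      have h1 : |d i| < g i := by
        rw [hg]
        simp only
        rw [← Real.sqrt_sq_eq_abs]
        exact Real.sqrt_lt_sqrt (sq_nonneg _) (by linarith)
      have := neg_abs_le (d i)
      linarith) hUunit) hγ
  · have hS : S * S = A ^ 2 + (c / γ) • 1 := hM.sqrt_mul_self
    rw [hAT]
    have h2 : γ⁻¹ • ((γ • (S + A)) * (γ • (S + A)))
        = γ • (S * S) + γ • (S * A) + γ • (A * S) + γ • (A * A) := by
      rw [smul_mul_smul_comm, smul_smul]
      have : γ⁻¹ * (γ * γ) = γ := by field_simp
      rw [this, show (S + A) * (S + A) = S * S + S * A + A * S + A * A by noncomm_ring,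
        smul_add, smul_add, smul_add]
    have h3 : γ • ((c / γ) • (1 : Matrix (Fin n) (Fin n) ℝ)) = c • 1 := by
      rw [smul_smul]
      congr 1
      field_simp
    rw [h2, hS]
    simp only [smul_add, mul_add, add_mul, mul_smul_comm, smul_mul_assoc, pow_two]
    rw [h3]
    abel
end

section
/- Let f : ℝᵈ → ℝ with the anchored decomposition at anchor c = 0. Suppose f has the γ-decaying sensitivity property: for every j the function g_j(x) = f(x) − f(x with x_j = 0) is Lipschitz in x_i with constant γ(dist_G(i,j))‖x_j‖. Then for any distinct i, j, k with dist_G(i,k) maximal among pairs in {i,j,k}, the third-order anchored component satisfies |f_{{i,j,k}}(x_i,x_j,x_k)| ≤ 2 γ(dist_G(i,k)) ‖x_k‖ ‖x_i‖. -/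
open Filter

/-- The anchored decomposition components: `f_∅ = f(c)` and
`f_u(x_u) = f((x_u; c)) - ∑_{v ⊊ u} f_v(x_v)`. -/
noncomputable def anchored {d : ℕ} (f : (Fin d → ℝ) → ℝ) (c x : Fin d → ℝ) :
    Finset (Fin d) → ℝ
  | u =>
    f (fun i => if i ∈ u then x i else c i) -
      ∑ v ∈ u.ssubsets.attach, anchored f c x v.1
  termination_by u => u.card
  decreasing_by exact Finset.card_lt_card (Finset.mem_ssubsets.mp v.2)

lemma anchored_sum_powerset {d : ℕ} (f : (Fin d → ℝ) → ℝ) (c x : Fin d → ℝ)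
    (u : Finset (Fin d)) :
    ∑ v ∈ u.powerset, anchored f c x v = f (fun i => if i ∈ u then x i else c i) := by
  have h1 : u ∈ u.powerset := Finset.mem_powerset_self u
  have h2 : u.powerset = insert u u.ssubsets := by
    rw [Finset.ssubsets, Finset.insert_erase h1]
  rw [h2, Finset.sum_insert (by simp [Finset.ssubsets])]
  rw [anchored, Finset.sum_attach]
  ring

lemma sum_powerset_singleton {d : ℕ} (g : Finset (Fin d) → ℝ) (a : Fin d) :
    ∑ v ∈ ({a} : Finset (Fin d)).powerset, g v = g ∅ + g {a} := by
  rw [show ({a} : Finset (Fin d)) = insert a ∅ from rfl,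
    Finset.sum_powerset_insert (by simp), Finset.powerset_empty,
    Finset.sum_singleton, Finset.sum_singleton]

variable {d : ℕ} (f : (Fin d → ℝ) → ℝ) (c x : Fin d → ℝ)

lemma anchored_empty : anchored f c x ∅ = f c := by
  have h := anchored_sum_powerset f c x ∅
  simpa using h

lemma anchored_single (a : Fin d) :
    anchored f c x {a} = f (fun t => if t ∈ ({a} : Finset (Fin d)) then x t else c t) - f c := by
  have h := anchored_sum_powerset f c x {a}
  rw [sum_powerset_singleton, anchored_empty] at h
  linarith

lemma anchored_pair {a b : Fin d} (hab : a ≠ b) :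
    anchored f c x {a, b} =
      f (fun t => if t ∈ ({a, b} : Finset (Fin d)) then x t else c t)
      - f (fun t => if t ∈ ({a} : Finset (Fin d)) then x t else c t)
      - f (fun t => if t ∈ ({b} : Finset (Fin d)) then x t else c t) + f c := by
  have h := anchored_sum_powerset f c x {a, b}
  rw [show ({a, b} : Finset (Fin d)) = insert a {b} from rfl,
    Finset.sum_powerset_insert (by simp [hab]),
    sum_powerset_singleton, sum_powerset_singleton] at h
  simp only [LawfulSingleton.insert_empty_eq] at h
  rw [anchored_empty, anchored_single, anchored_single] at h
  linarith

lemma anchored_triple {a b e : Fin d} (hab : a ≠ b) (hbe : b ≠ e) (hae : a ≠ e) :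
    anchored f c x {a, b, e} =
      f (fun t => if t ∈ ({a, b, e} : Finset (Fin d)) then x t else c t)
      - f (fun t => if t ∈ ({a, b} : Finset (Fin d)) then x t else c t)
      - f (fun t => if t ∈ ({a, e} : Finset (Fin d)) then x t else c t)
      - f (fun t => if t ∈ ({b, e} : Finset (Fin d)) then x t else c t)
      + f (fun t => if t ∈ ({a} : Finset (Fin d)) then x t else c t)
      + f (fun t => if t ∈ ({b} : Finset (Fin d)) then x t else c t)
      + f (fun t => if t ∈ ({e} : Finset (Fin d)) then x t else c t)
      - f c := by
  have h := anchored_sum_powerset f c x {a, b, e}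
  rw [show ({a, b, e} : Finset (Fin d)) = insert a {b, e} from rfl,
    Finset.sum_powerset_insert (by simp [hab, hae]),
    show ({b, e} : Finset (Fin d)) = insert b {e} from rfl,
    Finset.sum_powerset_insert (by simp [hbe]),
    Finset.sum_powerset_insert (by simp [hbe]),
    sum_powerset_singleton, sum_powerset_singleton, sum_powerset_singleton,
    sum_powerset_singleton] at h
  simp only [LawfulSingleton.insert_empty_eq] at h
  rw [anchored_empty, anchored_single, anchored_single, anchored_single,
    anchored_pair f c x hab, anchored_pair f c x hae, anchored_pair f c x hbe] at h
  linarith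

lemma update_indicator {d : ℕ} (x : Fin d → ℝ) (v : Finset (Fin d)) (p : Fin d) :
    Function.update (fun t => if t ∈ v then x t else 0) p 0
      = fun t => if t ∈ v.erase p then x t else 0 := by
  funext t
  rcases eq_or_ne t p with rfl | h
  · simp
  · simp [Function.update_of_ne h, Finset.mem_erase, h]


/-- if `f : ℝᵈ → ℝ` has the `γ`-decaying sensitivity property (with anchor
`0`), i.e. `g_j(x) = f(x) - f(x with x_j = 0)` is Lipschitz in `x_i` with constant
`γ(dist_G(i,j))|x_j|`, then for distinct `i, j, k` with `dist_G(i,k)` maximal among the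
pairs in `{i,j,k}`, the third-order anchored component satisfies
`|f_{{i,j,k}}(x_i,x_j,x_k)| ≤ 2 γ(dist_G(i,k)) |x_k| |x_i|`. -/
theorem stmt11 {d : ℕ} (f : (Fin d → ℝ) → ℝ)
    (dG : Fin d → Fin d → ℕ) (hsym : ∀ p q, dG p q = dG q p)
    (γ : ℝ → ℝ)
    (hγcont : ContinuousOn γ (Set.Ici 0))
    (hγanti : StrictAntiOn γ (Set.Ici 0))
    (hγ0 : Tendsto γ atTop (nhds 0))
    (hγnonneg : ∀ t ∈ Set.Ici (0 : ℝ), 0 ≤ γ t)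
    (hsens : ∀ p q, p ≠ q → ∀ (x : Fin d → ℝ) (zp : ℝ),
      |(f x - f (Function.update x q 0)) -
          (f (Function.update x p zp) -
            f (Function.update (Function.update x p zp) q 0))|
        ≤ γ (dG p q) * |x q| * |x p - zp|)
    (i j k : Fin d) (hij : i ≠ j) (hjk : j ≠ k) (hik : i ≠ k)
    (hmax : ∀ p ∈ ({i, j, k} : Finset (Fin d)), ∀ q ∈ ({i, j, k} : Finset (Fin d)),
      dG p q ≤ dG i k)
    (x : Fin d → ℝ) :
    |anchored f 0 x {i, j, k}| ≤ 2 * γ (dG i k) * |x k| * |x i| := by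
  have h3 := anchored_triple f 0 x hij hjk hik
  simp only [Pi.zero_apply] at h3
  -- erase computations
  have e1 : ({i, j, k} : Finset (Fin d)).erase k = {i, j} := by
    ext t
    simp only [Finset.mem_erase, Finset.mem_insert, Finset.mem_singleton]
    constructor
    · rintro ⟨h1, rfl | rfl | rfl⟩
      · exact Or.inl rfl
      · exact Or.inr rfl
      · exact absurd rfl h1
    · rintro (rfl | rfl)
      · exact ⟨hik, Or.inl rfl⟩
      · exact ⟨hjk, Or.inr (Or.inl rfl)⟩
  have e2 : ({i, j, k} : Finset (Fin d)).erase i = {j, k} := by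
    ext t
    simp only [Finset.mem_erase, Finset.mem_insert, Finset.mem_singleton]
    constructor
    · rintro ⟨h1, rfl | rfl | rfl⟩
      · exact absurd rfl h1
      · exact Or.inl rfl
      · exact Or.inr rfl
    · rintro (rfl | rfl)
      · exact ⟨Ne.symm hij, Or.inr (Or.inl rfl)⟩
      · exact ⟨Ne.symm hik, Or.inr (Or.inr rfl)⟩
  have e3 : ({j, k} : Finset (Fin d)).erase k = {j} := by
    ext t
    simp only [Finset.mem_erase, Finset.mem_insert, Finset.mem_singleton]
    constructor
    · rintro ⟨h1, rfl | rfl⟩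
      · rfl
      · exact absurd rfl h1
    · rintro rfl
      exact ⟨hjk, Or.inl rfl⟩
  have e4 : ({i, k} : Finset (Fin d)).erase k = {i} := by
    ext t
    simp only [Finset.mem_erase, Finset.mem_insert, Finset.mem_singleton]
    constructor
    · rintro ⟨h1, rfl | rfl⟩
      · rfl
      · exact absurd rfl h1
    · rintro rfl
      exact ⟨hik, Or.inl rfl⟩
  have e5 : ({i, k} : Finset (Fin d)).erase i = {k} := by
    ext t
    simp only [Finset.mem_erase, Finset.mem_insert, Finset.mem_singleton]
    constructor
    · rintro ⟨h1, rfl | rfl⟩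
      · exact absurd rfl h1
      · rfl
    · rintro rfl
      exact ⟨Ne.symm hik, Or.inr rfl⟩
  have e6 : ({k} : Finset (Fin d)).erase k = (∅ : Finset (Fin d)) := Finset.erase_singleton k
  have E1 := hsens i k hik (fun t => if t ∈ ({i, j, k} : Finset (Fin d)) then x t else 0) 0
  have E2 := hsens i k hik (fun t => if t ∈ ({i, k} : Finset (Fin d)) then x t else 0) 0
  rw [update_indicator, update_indicator, update_indicator, e1, e2, e3] at E1
  rw [update_indicator, update_indicator, update_indicator, e4, e5, e6] at E2
  rw [if_pos (by simp : k ∈ ({i, j, k} : Finset (Fin d))),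
    if_pos (by simp : i ∈ ({i, j, k} : Finset (Fin d))), sub_zero] at E1
  rw [if_pos (by simp : k ∈ ({i, k} : Finset (Fin d))),
    if_pos (by simp : i ∈ ({i, k} : Finset (Fin d))), sub_zero] at E2
  rw [show (fun t => if t ∈ (∅ : Finset (Fin d)) then x t else (0:ℝ)) = (0 : Fin d → ℝ) by
    funext t; simp] at E2
  rw [h3]
  set F1 := f (fun t => if t ∈ ({i, j, k} : Finset (Fin d)) then x t else 0) with hF1
  set F2 := f (fun t => if t ∈ ({i, j} : Finset (Fin d)) then x t else 0) with hF2
  set F3 := f (fun t => if t ∈ ({i, k} : Finset (Fin d)) then x t else 0) with hF3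
  set F4 := f (fun t => if t ∈ ({j, k} : Finset (Fin d)) then x t else 0) with hF4
  set F5 := f (fun t => if t ∈ ({i} : Finset (Fin d)) then x t else 0) with hF5
  set F6 := f (fun t => if t ∈ ({j} : Finset (Fin d)) then x t else 0) with hF6
  set F7 := f (fun t => if t ∈ ({k} : Finset (Fin d)) then x t else 0) with hF7
  set F8 := f (0 : Fin d → ℝ) with hF8
  have habs := abs_sub (F1 - F2 - (F4 - F6)) (F3 - F5 - (F7 - F8))
  rw [show F1 - F2 - F3 - F4 + F5 + F6 + F7 - F8
      = (F1 - F2 - (F4 - F6)) - (F3 - F5 - (F7 - F8)) by ring]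
  linarith [E1, E2, habs]
end

section
/- Let a < b, γ > 0, c > 0 and set θ = (2/(γ(b−a)²))·(√((a²γ+c)(b²γ+c)) + abγ + c). Then θ > 0 and χ := √θ + √(θ+1) > 1, and the ellipse with foci ±1 and semi-axis sum χ passes through the points x_{1/2} = −(b+a)/(b−a) ± 2i√c/(√γ(b−a)); i.e., |x − 1| + |x + 1| = χ + 1/χ holds for x = x_{1/2}. -/
set_option maxHeartbeats 2000000 in
/-- let `a < b`, `γ > 0`, `c > 0` and
`θ = (2/(γ(b-a)²))(√((a²γ+c)(b²γ+c)) + abγ + c)`.  Then `θ > 0`,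
`χ := √θ + √(θ+1) > 1`, and the Bernstein ellipse with foci `±1` and semi-axis sum `χ`
passes through the branch points `x_{1/2} = -(b+a)/(b-a) ± 2i√c/(√γ(b-a))`, i.e.
`|x - 1| + |x + 1| = χ + 1/χ` for `x = x_{1/2}`. -/
theorem stmt16 (a b c γ : ℝ) (hab : a < b) (hc : 0 < c) (hγ : 0 < γ) :
    (0 < 2 / (γ * (b - a) ^ 2) *
        (Real.sqrt ((a ^ 2 * γ + c) * (b ^ 2 * γ + c)) + a * b * γ + c)) ∧
    (1 < Real.sqrt (2 / (γ * (b - a) ^ 2) *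
          (Real.sqrt ((a ^ 2 * γ + c) * (b ^ 2 * γ + c)) + a * b * γ + c)) +
        Real.sqrt (2 / (γ * (b - a) ^ 2) *
          (Real.sqrt ((a ^ 2 * γ + c) * (b ^ 2 * γ + c)) + a * b * γ + c) + 1)) ∧
    (∀ sgn : ℝ, sgn = 1 ∨ sgn = -1 →
      (let θ : ℝ := 2 / (γ * (b - a) ^ 2) *
          (Real.sqrt ((a ^ 2 * γ + c) * (b ^ 2 * γ + c)) + a * b * γ + c)
       let χ : ℝ := Real.sqrt θ + Real.sqrt (θ + 1)
       let x : ℂ := (↑(-(b + a) / (b - a)) : ℂ) +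
          (↑(sgn * (2 * Real.sqrt c / (Real.sqrt γ * (b - a)))) : ℂ) * Complex.I
       ‖x - 1‖ + ‖x + 1‖ = χ + 1 / χ)) := by
  have hd : (0:ℝ) < b - a := by linarith
  have hA : (0:ℝ) < a ^ 2 * γ + c := by positivity
  have hB : (0:ℝ) < b ^ 2 * γ + c := by positivity
  have hsA : Real.sqrt (a ^ 2 * γ + c) ^ 2 = a ^ 2 * γ + c := Real.sq_sqrt hA.le
  have hsB : Real.sqrt (b ^ 2 * γ + c) ^ 2 = b ^ 2 * γ + c := Real.sq_sqrt hB.le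
  have hsAnn : 0 ≤ Real.sqrt (a ^ 2 * γ + c) := Real.sqrt_nonneg _
  have hsBnn : 0 ≤ Real.sqrt (b ^ 2 * γ + c) := Real.sqrt_nonneg _
  have hg : 0 < Real.sqrt γ := Real.sqrt_pos.mpr hγ
  have hg2 : Real.sqrt γ ^ 2 = γ := Real.sq_sqrt hγ.le
  have hc2 : Real.sqrt c ^ 2 = c := Real.sq_sqrt hc.le
  have hmul : Real.sqrt (a ^ 2 * γ + c) * Real.sqrt (b ^ 2 * γ + c) =
      Real.sqrt ((a ^ 2 * γ + c) * (b ^ 2 * γ + c)) := (Real.sqrt_mul hA.le _).symm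
  -- numerator positivity
  have hkey : (a ^ 2 * γ + c) * (b ^ 2 * γ + c) - (a * b * γ + c) ^ 2
      = γ * c * (b - a) ^ 2 := by ring
  have hpos : (0:ℝ) < γ * c * (b - a) ^ 2 := by positivity
  have habs : |a * b * γ + c| < Real.sqrt ((a ^ 2 * γ + c) * (b ^ 2 * γ + c)) := by
    rw [← Real.sqrt_sq (abs_nonneg (a * b * γ + c))]
    apply Real.sqrt_lt_sqrt (by positivity)
    rw [sq_abs]
    linarith
  have hnum : 0 < Real.sqrt ((a ^ 2 * γ + c) * (b ^ 2 * γ + c)) + a * b * γ + c := by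
    have := neg_abs_le (a * b * γ + c)
    linarith
  have hθ : 0 < 2 / (γ * (b - a) ^ 2) *
      (Real.sqrt ((a ^ 2 * γ + c) * (b ^ 2 * γ + c)) + a * b * γ + c) :=
    mul_pos (by positivity) hnum
  set θ : ℝ := 2 / (γ * (b - a) ^ 2) *
      (Real.sqrt ((a ^ 2 * γ + c) * (b ^ 2 * γ + c)) + a * b * γ + c) with hθdef
  have hθ1 : θ + 1 = ((Real.sqrt (a ^ 2 * γ + c) + Real.sqrt (b ^ 2 * γ + c)) /
      (Real.sqrt γ * (b - a))) ^ 2 := by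
    rw [div_pow, mul_pow, hg2, add_sq, hsA, hsB, mul_assoc, hmul, hθdef]
    field_simp
    ring
  have hsθ1 : Real.sqrt (θ + 1) =
      (Real.sqrt (a ^ 2 * γ + c) + Real.sqrt (b ^ 2 * γ + c)) /
        (Real.sqrt γ * (b - a)) := by
    rw [hθ1, Real.sqrt_sq (div_nonneg (by positivity) (mul_pos hg hd).le)]
  have hsθ1pos : 1 ≤ Real.sqrt (θ + 1) := by
    have h := Real.sqrt_le_sqrt (show (1:ℝ) ≤ θ + 1 by linarith)
    simpa using h
  have hsθpos : 0 < Real.sqrt θ := Real.sqrt_pos.mpr hθ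
  clear_value θ
  refine ⟨hθ, by linarith, ?_⟩
  intro sgn hsgn
  intro θ' χ x
  have hχdef : χ = Real.sqrt θ + Real.sqrt (θ + 1) := rfl
  have hxdef : x = ((-(b + a) / (b - a) : ℝ) : ℂ) +
      ((sgn * (2 * Real.sqrt c / (Real.sqrt γ * (b - a))) : ℝ) : ℂ) * Complex.I := rfl
  clear_value x χ θ'
  clear θ'
  have hχpos : 0 < χ := by rw [hχdef]; linarith
  have hsθ : Real.sqrt θ ^ 2 = θ := Real.sq_sqrt hθ.le
  have hsθ1sq : Real.sqrt (θ + 1) ^ 2 = θ + 1 := Real.sq_sqrt (by linarith)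
  have hinv : 1 / χ = Real.sqrt (θ + 1) - Real.sqrt θ := by
    rw [div_eq_iff hχpos.ne', hχdef]
    nlinarith
  have hrhs : χ + 1 / χ = 2 * Real.sqrt (θ + 1) := by
    rw [hinv, hχdef]; ring
  have hsgn2 : sgn ^ 2 = 1 := by rcases hsgn with h | h <;> rw [h] <;> norm_num
  set u : ℝ := -(b + a) / (b - a) with hu
  set v : ℝ := sgn * (2 * Real.sqrt c / (Real.sqrt γ * (b - a))) with hv
  clear_value u v
  have hx1 : x - 1 = ((u - 1 : ℝ) : ℂ) + (v : ℂ) * Complex.I := by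
    rw [hxdef, hu, hv]; push_cast; ring
  have hx2 : x + 1 = ((u + 1 : ℝ) : ℂ) + (v : ℂ) * Complex.I := by
    rw [hxdef, hu, hv]; push_cast; ring
  have hv2 : v ^ 2 = 4 * c / (γ * (b - a) ^ 2) := by
    rw [hv, mul_pow, div_pow, mul_pow, mul_pow, hc2, hg2, hsgn2]
    ring
  have habs1 : ‖x - 1‖ =
      2 * Real.sqrt (b ^ 2 * γ + c) / (Real.sqrt γ * (b - a)) := by
    rw [hx1, Complex.norm_add_mul_I]
    rw [show (u - 1) ^ 2 + v ^ 2 =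
        (2 * Real.sqrt (b ^ 2 * γ + c) / (Real.sqrt γ * (b - a))) ^ 2 by
      rw [hv2, hu, div_pow, mul_pow, mul_pow, hsB, hg2]
      field_simp
      ring]
    exact Real.sqrt_sq (div_nonneg (by positivity) (mul_pos hg hd).le)
  have habs2 : ‖x + 1‖ =
      2 * Real.sqrt (a ^ 2 * γ + c) / (Real.sqrt γ * (b - a)) := by
    rw [hx2, Complex.norm_add_mul_I]
    rw [show (u + 1) ^ 2 + v ^ 2 =
        (2 * Real.sqrt (a ^ 2 * γ + c) / (Real.sqrt γ * (b - a))) ^ 2 by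
      rw [hv2, hu, div_pow, mul_pow, mul_pow, hsA, hg2]
      field_simp
      ring]
    exact Real.sqrt_sq (div_nonneg (by positivity) (mul_pos hg hd).le)
  rw [habs1, habs2, hrhs, hsθ1]
  field_simp
  ring
end
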